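/- Under the three-point distribution with P(X=±1)=(1-δ)/2, P(X=0)=δ, and loss ℓ(θ,x)=|θ-x|-|x| on Θ=[-1,1]: if the number of sample points equal to +1 strictly exceeds the number equal to -1 plus the number equal to 0, then the empirical risk minimizer θ̂ = argmin_{θ∈[-1,1]} (1/n)∑|θ - Xᵢ| equals 1, and R(1) - R(0) = δ. -/

import Mathlib

open Finset
open scoped Classical

/-- The population risk `R(θ) = δ|θ| + ((1-δ)/2)(|θ-1| + |θ+1|) - (1-δ)`. -/
noncomputable def popRisk (δ θ : ℝ) : ℝ :=
  δ * |θ| + ((1 - δ) / 2) * (|θ - 1| + |θ + 1|) - (1 - δ)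

/-- Moving away from `a` by `|θ - a|` gains exactly that much on every sample point equal to `a`
and, by the triangle inequality, loses at most that much on every other one. -/
theorem sum_abs_sub_lt_of_card_lt {ι : Type*} [Fintype ι] (x : ι → ℝ) {a θ : ℝ} (hθ : θ ≠ a)
    (hmaj : #{i | x i ≠ a} < #{i | x i = a}) :
    ∑ i, |a - x i| < ∑ i, |θ - x i| := by
  have hpos : 0 < |θ - a| := abs_pos.mpr (sub_ne_zero.mpr hθ)
  have hgain : ∑ i ∈ {i | x i = a}, (|θ - x i| - |a - x i|) = #{i | x i = a} * |θ - a| := by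
    rw [sum_congr rfl fun i hi => by rw [(mem_filter.mp hi).2, sub_self, abs_zero, sub_zero],
      sum_const, nsmul_eq_mul]
  have hloss : -(#{i | x i ≠ a} * |θ - a|) ≤ ∑ i ∈ {i | x i ≠ a}, (|θ - x i| - |a - x i|) := by
    rw [← nsmul_eq_mul, ← sum_const, ← sum_neg_distrib]
    refine sum_le_sum fun i _ => ?_
    have := abs_sub_abs_le_abs_sub (a - x i) (θ - x i)
    rw [show a - x i - (θ - x i) = -(θ - a) by ring, abs_neg] at this
    linarith
  have hcard : (#{i | x i ≠ a} : ℝ) < #{i | x i = a} := by exact_mod_cast hmaj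
  suffices 0 < ∑ i, (|θ - x i| - |a - x i|) by rwa [sum_sub_distrib, sub_pos] at this
  rw [← sum_filter_add_sum_filter_not univ (fun i => x i = a), hgain]
  nlinarith

theorem card_filter_ne_one_eq {ι : Type*} [Fintype ι] {x : ι → ℝ}
    (hx : ∀ i, x i = -1 ∨ x i = 0 ∨ x i = 1) :
    #{i | x i ≠ 1} = #{i | x i = -1} + #{i | x i = 0} := by
  rw [← card_union_of_disjoint (disjoint_filter.mpr fun i _ h => by norm_num [h]),
    ← filter_or]
  congr 1
  ext i
  rcases hx i with h | h | h <;> norm_num [h]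

theorem popRisk_one_sub_popRisk_zero (δ : ℝ) : popRisk δ 1 - popRisk δ 0 = δ := by
  norm_num [popRisk]

theorem erm_pushed_to_boundary_general (n : ℕ) (δ : ℝ)
    (x : Fin n → ℝ) (hx : ∀ i, x i = -1 ∨ x i = 0 ∨ x i = 1)
    (hcount : (Finset.univ.filter fun i => x i = 1).card >
      (Finset.univ.filter fun i => x i = -1).card +
        (Finset.univ.filter fun i => x i = 0).card) :
    (∀ θ ∈ Set.Icc (-1 : ℝ) 1, θ ≠ 1 →
      (1 / n) * ∑ i, |1 - x i| < (1 / n) * ∑ i, |θ - x i|) ∧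
    popRisk δ 1 - popRisk δ 0 = δ := by
  refine ⟨fun θ _ hθ => ?_, popRisk_one_sub_popRisk_zero δ⟩
  obtain ⟨i, -⟩ := card_pos.mp (Nat.zero_lt_of_lt hcount)
  have hn : (0 : ℝ) < n := Nat.cast_pos.mpr i.pos
  refine mul_lt_mul_of_pos_left (sum_abs_sub_lt_of_card_lt x hθ ?_) (by positivity)
  rw [card_filter_ne_one_eq hx]
  exact hcount

theorem erm_pushed_to_boundary (n : ℕ) (hn : 0 < n) (δ : ℝ) (hδ : δ ∈ Set.Icc (0 : ℝ) 1)
    (x : Fin n → ℝ) (hx : ∀ i, x i = -1 ∨ x i = 0 ∨ x i = 1)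
    (hcount : (Finset.univ.filter fun i => x i = 1).card >
      (Finset.univ.filter fun i => x i = -1).card +
        (Finset.univ.filter fun i => x i = 0).card) :
    (∀ θ ∈ Set.Icc (-1 : ℝ) 1, θ ≠ 1 →
      (1 / n) * ∑ i, |1 - x i| < (1 / n) * ∑ i, |θ - x i|) ∧
    popRisk δ 1 - popRisk δ 0 = δ :=
  erm_pushed_to_boundary_general n δ x hx hcount
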